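/- Let x, y, h be an sl(2) triple acting on a module. For any K(z) ∈ ℂ[[z]] with :z^k: = x^k y^k, the operator identity :K(z):·x = x·:(zK'' + K): - x·:K':·h holds. -/

import Mathlib

/-!
Moving `x` to the left through `y ^ (k + 1)` gives
`y ^ (k + 1) x = x y ^ (k + 1) - (k + 1) y ^ k (h - k)`, so the defect
`x^k y^k x - x (x^k y^k)` of the `k`-th monomial is `k (k - 1) x·x^(k-1) y^(k-1) - k x·x^(k-1) y^(k-1) h`.
Weighting by `α k` and shifting the index by one turns the sum of these defects into the
`zK''` and `K'` terms; the shift costs nothing since the defect vanishes at `k = 0` and `α (N + 1) = 0`.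
-/

namespace Sl2Triple

variable {A : Type*} [Ring A] {x y h : A}

theorem h_mul_y_pow (hy : h * y - y * h = -(2 * y)) (m : ℕ) :
    h * y ^ m = y ^ m * h - (2 * m) • y ^ m := by
  rw [sub_eq_iff_eq_add] at hy
  induction m with
  | zero => simp
  | succ m ih =>
    rw [pow_succ', ← mul_assoc, hy, add_mul, neg_mul, mul_assoc y h, ih, mul_sub, mul_smul_comm,
      mul_assoc, ← mul_assoc y, two_mul]
    module

theorem y_pow_succ_mul_x (hy : h * y - y * h = -(2 * y)) (hxy : x * y - y * x = h) (k : ℕ) :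
    y ^ (k + 1) * x = x * y ^ (k + 1) - (k + 1) • (y ^ k * h) + ((k + 1) * k) • y ^ k := by
  have hyx : y * x = x * y - h := by rw [← hxy, sub_sub_cancel]
  induction k with
  | zero => simp [hyx]
  | succ k ih =>
    rw [pow_succ' y (k + 1), mul_assoc, ih, mul_add, mul_sub, ← mul_assoc y x, hyx,
      sub_mul, h_mul_y_pow hy, mul_smul_comm, mul_smul_comm, ← mul_assoc y, mul_assoc x,
      ← pow_succ', ← pow_succ']
    module

theorem x_pow_succ_mul_y_pow_succ_mul_x_sub (hy : h * y - y * h = -(2 * y))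
    (hxy : x * y - y * x = h) (k : ℕ) :
    x ^ (k + 1) * y ^ (k + 1) * x - x * (x ^ (k + 1) * y ^ (k + 1))
      = ((k + 1) * k) • (x * (x ^ k * y ^ k)) - (k + 1) • (x * (x ^ k * y ^ k) * h) := by
  rw [mul_assoc, y_pow_succ_mul_x hy hxy]
  simp only [mul_add, mul_sub, mul_smul_comm, ← mul_assoc, ← pow_succ, ← pow_succ']
  abel

end Sl2Triple

open Finset Sl2Triple in
theorem normal_ordered_right_identity_general {A : Type*} [Ring A] [Algebra ℂ A]
    (x y h : A)
    (hy : h * y - y * h = -(2 * y))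
    (hxy : x * y - y * x = h)
    (N : ℕ) (α : ℕ → ℂ) (htop : α (N + 1) = 0) :
    ∑ k ∈ Finset.range (N + 1), α k • (x ^ k * y ^ k * x)
      = ∑ k ∈ Finset.range (N + 1),
          ((((k : ℂ) + 1) * (k : ℂ)) * α (k + 1) + α k) • (x * (x ^ k * y ^ k))
        - ∑ k ∈ Finset.range (N + 1),
          (((k : ℂ) + 1) * α (k + 1)) • (x * (x ^ k * y ^ k) * h) := by
  set T : ℕ → A := fun k => x * (x ^ k * y ^ k)
  set D : ℕ → A := fun k => x ^ k * y ^ k * x - T k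
  have hD : ∀ k : ℕ, α (k + 1) • D (k + 1)
      = (((k : ℂ) + 1) * k * α (k + 1)) • T k - (((k : ℂ) + 1) * α (k + 1)) • (T k * h) := by
    intro k
    simp only [D, T, x_pow_succ_mul_y_pow_succ_mul_x_sub hy hxy, ← Nat.cast_smul_eq_nsmul ℂ]
    push_cast
    module
  calc ∑ k ∈ range (N + 1), α k • (x ^ k * y ^ k * x)
      = ∑ k ∈ range (N + 1), α k • T k + ∑ k ∈ range (N + 1), α k • D k := by
        simp only [D, ← sum_add_distrib, ← smul_add, add_sub_cancel]
    _ = ∑ k ∈ range (N + 1), α k • T k + ∑ k ∈ range (N + 1), α (k + 1) • D (k + 1) := by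
        rw [sum_range_succ' (fun k => α k • D k), sum_range_succ (fun k => α (k + 1) • D (k + 1)),
          htop]
        simp [D, T]
    _ = _ := by
        simp only [hD, add_smul, sum_add_distrib, sum_sub_distrib]
        abel

/-- For an sl(2) triple `x, y, h` and any (truncated) formal series
`K(z) = Σ αₖ z^k` with normal ordering `:z^k: = x^k y^k`, the operator identity
`:K(z):·x = x·:(zK'' + K): - x·:K':·h` holds, order by order. -/
theorem normal_ordered_right_identity {A : Type*} [Ring A] [Algebra ℂ A]
    (x y h : A)
    (hx : h * x - x * h = 2 * x)
    (hy : h * y - y * h = -(2 * y))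
    (hxy : x * y - y * x = h)
    (N : ℕ) (α : ℕ → ℂ) (htop : α (N + 1) = 0) :
    ∑ k ∈ Finset.range (N + 1), α k • (x ^ k * y ^ k * x)
      = ∑ k ∈ Finset.range (N + 1),
          ((((k : ℂ) + 1) * (k : ℂ)) * α (k + 1) + α k) • (x * (x ^ k * y ^ k))
        - ∑ k ∈ Finset.range (N + 1),
          (((k : ℂ) + 1) * α (k + 1)) • (x * (x ^ k * y ^ k) * h) :=
  normal_ordered_right_identity_general x y h hy hxy N α htop
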